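/- Fix μ ∈ [0, 1/2]. Along every C¹ solution (r(τ), θ(τ), v(τ), u(τ)), with r(τ) > 0 and 1 + r(τ)² − 2r(τ)cos θ(τ) > 0, of the McGehee-regularized system r' = rv, θ' = u, v' = v²/2 + u² + 2u r^{3/2} + r³ − 1 + μ[1 − r²(cos θ + (r − cos θ)(1+r²−2r cos θ)^{−3/2})], u' = −uv/2 − 2v r^{3/2} + μ r² sin θ [1 − (1+r²−2r cos θ)^{−3/2}], the energy function E(r,θ,v,u) = (v² + u²)/(2r) − r²/2 − (1−μ)/r + μ(−μ/2 + r cos θ − (1+r²−2r cos θ)^{−1/2}) is constant. -/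

import Mathlib

open Real Filter
open scoped Topology

/-- The first integral of the McGehee-regularized collision system, i.e. the PCRTBP
Hamiltonian expressed in McGehee collision coordinates `(r,θ,v,u)`. -/
noncomputable def Ecol (μ r θ v u : ℝ) : ℝ :=
  (v ^ 2 + u ^ 2) / (2 * r) - r ^ 2 / 2 - (1 - μ) / r +
    μ * (-μ / 2 + r * Real.cos θ - (1 + r ^ 2 - 2 * r * Real.cos θ) ^ (-(1 / 2) : ℝ))

/-!
By the chain rule, along any curve `dE/dτ = ∂ᵣE · r' + ∂θE · θ' + (v v' + u u') / r`.
Substituting the regularized vector field, the Coriolis terms `±2uv r^{3/2}` cancel in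
`v v' + u u'` and everything else cancels against the partial derivatives of `E`, so the
derivative vanishes wherever the field is defined. On an interval a function with zero
derivative is constant by the mean value theorem.
-/

theorem Set.OrdConnected.eq_of_forall_hasDerivAt_zero {E : Type*} [NormedAddCommGroup E]
    [NormedSpace ℝ E] {f : ℝ → E} {s : Set ℝ} (hs : s.OrdConnected)
    (hf : ∀ x ∈ s, HasDerivAt f 0 x) {x y : ℝ} (hx : x ∈ s) (hy : y ∈ s) : f x = f y := by
  have h := hs.convex.norm_image_sub_le_of_norm_hasDerivWithin_le
    (fun z hz => (hf z hz).hasDerivWithinAt) (fun _ _ => norm_zero.le) hx hy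
  rw [zero_mul, norm_le_zero_iff, sub_eq_zero] at h
  exact h.symm

section Curve

/- `1 + r² - 2 r cos θ` is the squared distance from the point with polar coordinates `(r, θ)`
to the second primary, which sits at `(1, 0)`. -/

variable {r θ : ℝ → ℝ} {r' θ' τ : ℝ}

theorem hasDerivAt_secondPrimaryDistSq (hr : HasDerivAt r r' τ) (hθ : HasDerivAt θ θ' τ) :
    HasDerivAt (fun t => 1 + r t ^ 2 - 2 * r t * cos (θ t))
      (2 * ((r τ - cos (θ τ)) * r' + r τ * sin (θ τ) * θ')) τ := by
  refine (((hr.fun_pow 2).const_add 1).fun_sub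
    ((hr.const_mul 2).fun_mul ((hasDerivAt_cos (θ τ)).comp τ hθ))).congr_deriv ?_
  simp only [Function.comp_apply, Nat.cast_ofNat]
  ring

theorem hasDerivAt_secondPrimaryDistSq_rpow_neg_half (hr : HasDerivAt r r' τ)
    (hθ : HasDerivAt θ θ' τ) (hρ : 0 < 1 + r τ ^ 2 - 2 * r τ * cos (θ τ)) :
    HasDerivAt (fun t => (1 + r t ^ 2 - 2 * r t * cos (θ t)) ^ (-(1 / 2) : ℝ))
      (-(1 + r τ ^ 2 - 2 * r τ * cos (θ τ)) ^ (-(3 / 2) : ℝ) *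
        ((r τ - cos (θ τ)) * r' + r τ * sin (θ τ) * θ')) τ := by
  refine ((hasDerivAt_secondPrimaryDistSq hr hθ).rpow_const (Or.inl hρ.ne')).congr_deriv ?_
  rw [show (-(1 / 2) - 1 : ℝ) = -(3 / 2) by norm_num]
  ring

end Curve

theorem hasDerivAt_Ecol_comp (μ : ℝ) {r θ v u : ℝ → ℝ} {r' θ' v' u' τ : ℝ}
    (hr : HasDerivAt r r' τ) (hθ : HasDerivAt θ θ' τ) (hv : HasDerivAt v v' τ)
    (hu : HasDerivAt u u' τ) (hr0 : 0 < r τ) (hρ : 0 < 1 + r τ ^ 2 - 2 * r τ * cos (θ τ)) :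
    HasDerivAt (fun t => Ecol μ (r t) (θ t) (v t) (u t))
      ((-(v τ ^ 2 + u τ ^ 2) / (2 * r τ ^ 2) - r τ + (1 - μ) / r τ ^ 2
          + μ * (cos (θ τ) + (r τ - cos (θ τ)) *
              (1 + r τ ^ 2 - 2 * r τ * cos (θ τ)) ^ (-(3 / 2) : ℝ))) * r'
        - μ * r τ * sin (θ τ) *
            (1 - (1 + r τ ^ 2 - 2 * r τ * cos (θ τ)) ^ (-(3 / 2) : ℝ)) * θ'
        + v τ / r τ * v' + u τ / r τ * u') τ := by
  have hkin := ((hv.fun_pow 2).fun_add (hu.fun_pow 2)).div (hr.const_mul 2) (by positivity)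
  have hpot := (hasDerivAt_const τ (1 - μ)).fun_div hr hr0.ne'
  have hpert := (((hasDerivAt_const τ (-μ / 2)).fun_add
    (hr.fun_mul ((hasDerivAt_cos (θ τ)).comp τ hθ))).fun_sub
      (hasDerivAt_secondPrimaryDistSq_rpow_neg_half hr hθ hρ)).const_mul μ
  refine (((hkin.fun_sub ((hr.fun_pow 2).div_const 2)).fun_sub hpot).fun_add hpert).congr_deriv ?_
  simp only [Function.comp_apply, Nat.cast_ofNat]
  field_simp
  ring

theorem hasDerivAt_Ecol_comp_regularized_eq_zero (μ : ℝ) {r θ v u : ℝ → ℝ} {τ : ℝ}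
    (hr0 : 0 < r τ) (hρ : 0 < 1 + (r τ) ^ 2 - 2 * r τ * cos (θ τ))
    (hr : HasDerivAt r (r τ * v τ) τ)
    (hθ : HasDerivAt θ (u τ) τ)
    (hv : HasDerivAt v ((v τ) ^ 2 / 2 + (u τ) ^ 2 + 2 * u τ * (r τ) ^ ((3 : ℝ) / 2)
        + (r τ) ^ 3 - 1
        + μ * (1 - (r τ) ^ 2 * (cos (θ τ)
            + (r τ - cos (θ τ)) *
              (1 + (r τ) ^ 2 - 2 * r τ * cos (θ τ)) ^ (-(3 / 2) : ℝ)))) τ)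
    (hu : HasDerivAt u (-(u τ * v τ) / 2 - 2 * v τ * (r τ) ^ ((3 : ℝ) / 2)
        + μ * (r τ) ^ 2 * sin (θ τ) *
            (1 - (1 + (r τ) ^ 2 - 2 * r τ * cos (θ τ)) ^ (-(3 / 2) : ℝ))) τ) :
    HasDerivAt (fun t => Ecol μ (r t) (θ t) (v t) (u t)) 0 τ := by
  refine (hasDerivAt_Ecol_comp μ hr hθ hv hu hr0 hρ).congr_deriv ?_
  field_simp
  ring

theorem Ecol_first_integral_regularized_general
    (μ : ℝ)
    (I : Set ℝ) (hI : I.OrdConnected)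
    (r θ v u : ℝ → ℝ)
    (hsol : ∀ τ ∈ I,
      0 < r τ ∧
      0 < 1 + (r τ) ^ 2 - 2 * r τ * Real.cos (θ τ) ∧
      HasDerivAt r (r τ * v τ) τ ∧
      HasDerivAt θ (u τ) τ ∧
      HasDerivAt v ((v τ) ^ 2 / 2 + (u τ) ^ 2 + 2 * u τ * (r τ) ^ ((3 : ℝ) / 2)
        + (r τ) ^ 3 - 1
        + μ * (1 - (r τ) ^ 2 * (Real.cos (θ τ)
            + (r τ - Real.cos (θ τ)) *
              (1 + (r τ) ^ 2 - 2 * r τ * Real.cos (θ τ)) ^ (-(3 / 2) : ℝ)))) τ ∧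
      HasDerivAt u (-(u τ * v τ) / 2 - 2 * v τ * (r τ) ^ ((3 : ℝ) / 2)
        + μ * (r τ) ^ 2 * Real.sin (θ τ) *
            (1 - (1 + (r τ) ^ 2 - 2 * r τ * Real.cos (θ τ)) ^ (-(3 / 2) : ℝ))) τ) :
    ∀ τ₁ ∈ I, ∀ τ₂ ∈ I,
      Ecol μ (r τ₁) (θ τ₁) (v τ₁) (u τ₁) = Ecol μ (r τ₂) (θ τ₂) (v τ₂) (u τ₂) := by
  intro τ₁ h₁ τ₂ h₂
  refine hI.eq_of_forall_hasDerivAt_zero (f := fun t => Ecol μ (r t) (θ t) (v t) (u t))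
    (fun τ hτ => ?_) h₁ h₂
  obtain ⟨hr0, hρ, hr, hθ, hv, hu⟩ := hsol τ hτ
  exact hasDerivAt_Ecol_comp_regularized_eq_zero μ hr0 hρ hr hθ hv hu

/-- Along every C¹ solution of the McGehee-regularized collision system with `r > 0` and
`1 + r² - 2r cos θ > 0`, the energy `E` is constant. -/
theorem Ecol_first_integral_regularized
    (μ : ℝ) (hμ : μ ∈ Set.Icc (0 : ℝ) (1 / 2))
    (I : Set ℝ) (hI : I.OrdConnected)
    (r θ v u : ℝ → ℝ)
    (hsol : ∀ τ ∈ I,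
      0 < r τ ∧
      0 < 1 + (r τ) ^ 2 - 2 * r τ * Real.cos (θ τ) ∧
      HasDerivAt r (r τ * v τ) τ ∧
      HasDerivAt θ (u τ) τ ∧
      HasDerivAt v ((v τ) ^ 2 / 2 + (u τ) ^ 2 + 2 * u τ * (r τ) ^ ((3 : ℝ) / 2)
        + (r τ) ^ 3 - 1
        + μ * (1 - (r τ) ^ 2 * (Real.cos (θ τ)
            + (r τ - Real.cos (θ τ)) *
              (1 + (r τ) ^ 2 - 2 * r τ * Real.cos (θ τ)) ^ (-(3 / 2) : ℝ)))) τ ∧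
      HasDerivAt u (-(u τ * v τ) / 2 - 2 * v τ * (r τ) ^ ((3 : ℝ) / 2)
        + μ * (r τ) ^ 2 * Real.sin (θ τ) *
            (1 - (1 + (r τ) ^ 2 - 2 * r τ * Real.cos (θ τ)) ^ (-(3 / 2) : ℝ))) τ) :
    ∀ τ₁ ∈ I, ∀ τ₂ ∈ I,
      Ecol μ (r τ₁) (θ τ₁) (v τ₁) (u τ₁) = Ecol μ (r τ₂) (θ τ₂) (v τ₂) (u τ₂) :=
  Ecol_first_integral_regularized_general μ I hI r θ v u hsol
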